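/- Let a_1, a_2 ∈ F_p^n, b_1, b_2 ∈ F_p, and θ := lv(a_1, a_2) = (supp(a_1) ∪ supp(a_2)) \ supp(a_1 + a_2). Then every clause of F(a_1 + a_2, b_1 + b_2) is semantically entailed by F(a_1,b_1) ∧ F(a_2,b_2) ∧ V; moreover each such clause can be derived from these formulas by a resolution derivation of length at most 2(p^{|θ|} − 1) (possibly deriving a subclause). -/

import Mathlib

/-! Resolution proof system: clauses are finite sets of literals, a literal is
a pair (variable, polarity). -/

variable {V : Type} [DecidableEq V]

/-- `C` is a resolvent of `C₁` and `C₂` (on some variable `x`). -/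
def Resolvent (C₁ C₂ C : Finset (V × Bool)) : Prop :=
  ∃ x : V, (x, true) ∈ C₁ ∧ (x, false) ∈ C₂ ∧
    C = C₁.erase (x, true) ∪ C₂.erase (x, false)

/-- A resolution derivation from the clause set `A`, newest clause first:
each listed clause is a resolvent of two clauses that are in `A` or occur later
in the list. -/
def IsDerivation (A : Set (Finset (V × Bool))) : List (Finset (V × Bool)) → Prop
  | [] => True
  | c :: rest => IsDerivation A rest ∧
      ∃ c₁ c₂, (c₁ ∈ A ∨ c₁ ∈ rest) ∧ (c₂ ∈ A ∨ c₂ ∈ rest) ∧ Resolvent c₁ c₂ c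

/-- `Derives A n B` : every clause of `B` can be obtained from `A` by a single
resolution derivation adding at most `n` resolvents. -/
def Derives (A : Set (Finset (V × Bool))) (n : ℕ) (B : Set (Finset (V × Bool))) : Prop :=
  ∃ L : List (Finset (V × Bool)), IsDerivation A L ∧ L.length ≤ n ∧
    B ⊆ A ∪ {c | c ∈ L}

/-- A Boolean assignment satisfies a clause if it makes some literal true. -/
def SatClause (φ : V → Bool) (C : Finset (V × Bool)) : Prop :=
  ∃ l ∈ C, φ l.1 = l.2

/-- An assignment satisfies a set of clauses if it satisfies each of them. -/
def SatSet (φ : V → Bool) (A : Set (Finset (V × Bool))) : Prop :=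
  ∀ C ∈ A, SatClause φ C

/-! Encoding of linear equations over `F_p` as CNF formulas, with variables
`ξ_{i,k}` for `i : Fin n`, `k : ZMod p`. -/

/-- `supp` of a vector: the set of indices with nonzero entry. -/
def suppV {n : ℕ} {K : Type*} [Zero K] [DecidableEq K] (a : Fin n → K) : Finset (Fin n) :=
  Finset.univ.filter (fun i => a i ≠ 0)

/-- `P(a,c)` : assignments violating the equation `a·x = c`, supported on `supp(a)`. -/
def PViol {n p : ℕ} (a : Fin n → ZMod p) (c : ZMod p) : Set (Fin n → ZMod p) :=
  {x | dotProduct a x ≠ c ∧ suppV x ⊆ suppV a}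

/-- The clause `C_a(x) = ⋁_{i ∈ supp(a)} ¬ξ_{i,x_i}`. -/
def CCl {n p : ℕ} (a x : Fin n → ZMod p) : Finset ((Fin n × ZMod p) × Bool) :=
  (suppV a).image (fun i => ((i, x i), false))

/-- The CNF formula `F(a,c)` for a single equation `a·x = c`. -/
def FEq {n p : ℕ} (a : Fin n → ZMod p) (c : ZMod p) :
    Set (Finset ((Fin n × ZMod p) × Bool)) :=
  (fun x => CCl a x) '' (PViol a c)

/-- The CNF formula `F(A,b)` for a system of equations. -/
def FSys {m n p : ℕ} (A : Matrix (Fin m) (Fin n) (ZMod p)) (b : Fin m → ZMod p) :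
    Set (Finset ((Fin n × ZMod p) × Bool)) :=
  ⋃ i, FEq (A i) (b i)

/-- The clauses `V = ⋀_i ⋁_k ξ_{i,k}`. -/
def VCl (n p : ℕ) [NeZero p] : Set (Finset ((Fin n × ZMod p) × Bool)) :=
  {C | ∃ i : Fin n, C = Finset.univ.image (fun k : ZMod p => ((i, k), true))}

/-! Induct on `s ⊆ θ`: for every `x` violating `(a₁ + a₂)·x = b₁ + b₂`, some subclause of
`⋁_{i ∈ (supp a₁ ∪ supp a₂) \ s} ¬ξ_{i,x_i}` is derivable. For `s = ∅` this clause contains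
`C_{a_j}(x)` for an equation `a_j·x = b_j` that `x` violates. To add `i ∈ θ` to `s`, note that
`(a₁ + a₂)_i = 0`, so `x` with `x_i` replaced by any `k` still violates the sum; resolving the
axiom `⋁_k ξ_{i,k}` of `V` against the `p` clauses so obtained eliminates coordinate `i`. For
`s = θ` the index set is `supp (a₁ + a₂)`, and the costs obey `c_{j+1} ≤ p (c_j + 1)`, which
`c_j = 2 (p^j - 1)` satisfies since `p ≥ 2`. -/

open Finset

section Resolution

variable {A : Set (Finset (V × Bool))}

theorem IsDerivation.append :
    ∀ {L₁ L₂ : List (Finset (V × Bool))},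
      IsDerivation A L₁ → IsDerivation A L₂ → IsDerivation A (L₁ ++ L₂)
  | [], _, _, h₂ => h₂
  | _ :: _, _, ⟨hrest, c₁, c₂, m₁, m₂, hres⟩, h₂ =>
    ⟨hrest.append h₂, c₁, c₂, m₁.imp_right (List.mem_append_left _),
      m₂.imp_right (List.mem_append_left _), hres⟩

theorem Derives.of_mem {C : Finset (V × Bool)} (h : C ∈ A) : Derives A 0 {C} :=
  ⟨[], trivial, le_rfl, Set.singleton_subset_iff.mpr (Or.inl h)⟩

theorem Derives.mono {n m : ℕ} {B : Set (Finset (V × Bool))} (h : Derives A n B)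
    (hnm : n ≤ m) : Derives A m B :=
  let ⟨L, hL, hlen, hB⟩ := h
  ⟨L, hL, hlen.trans hnm, hB⟩

theorem Derives.resolve {n₁ n₂ : ℕ} {C₁ C₂ C : Finset (V × Bool)}
    (h₁ : Derives A n₁ {C₁}) (h₂ : Derives A n₂ {C₂}) (h : Resolvent C₁ C₂ C) :
    Derives A (n₁ + n₂ + 1) {C} := by
  obtain ⟨L₁, hL₁, hlen₁, hC₁⟩ := h₁
  obtain ⟨L₂, hL₂, hlen₂, hC₂⟩ := h₂
  rw [Set.singleton_subset_iff] at hC₁ hC₂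
  refine ⟨C :: (L₁ ++ L₂), ⟨hL₁.append hL₂, C₁, C₂,
    hC₁.imp_right (List.mem_append_left _), hC₂.imp_right (List.mem_append_right _), h⟩,
    ?_, Set.singleton_subset_iff.mpr (Or.inr List.mem_cons_self)⟩
  simp only [List.length_cons, List.length_append]
  omega

theorem Resolvent.satClause {φ : V → Bool} {C₁ C₂ C : Finset (V × Bool)}
    (h : Resolvent C₁ C₂ C) (h₁ : SatClause φ C₁) (h₂ : SatClause φ C₂) : SatClause φ C := by
  obtain ⟨x, -, -, rfl⟩ := h
  cases hx : φ x
  · obtain ⟨l, hl, hφl⟩ := h₁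
    refine ⟨l, mem_union_left _ (mem_erase.mpr ⟨?_, hl⟩), hφl⟩
    rintro rfl
    simp [hx] at hφl
  · obtain ⟨l, hl, hφl⟩ := h₂
    refine ⟨l, mem_union_right _ (mem_erase.mpr ⟨?_, hl⟩), hφl⟩
    rintro rfl
    simp [hx] at hφl

theorem IsDerivation.satClause {φ : V → Bool} (hA : SatSet φ A) :
    ∀ {L : List (Finset (V × Bool))}, IsDerivation A L → ∀ C ∈ L, SatClause φ C
  | [], _, _, hC => absurd hC List.not_mem_nil
  | _ :: _, ⟨hrest, c₁, c₂, m₁, m₂, hres⟩, C, hC => by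
    have ih := hrest.satClause hA
    rcases List.mem_cons.mp hC with rfl | hC
    · exact hres.satClause (m₁.elim (hA c₁) (ih c₁)) (m₂.elim (hA c₂) (ih c₂))
    · exact ih C hC

theorem Derives.satSet {φ : V → Bool} {n : ℕ} {B : Set (Finset (V × Bool))}
    (h : Derives A n B) (hA : SatSet φ A) : SatSet φ B := by
  obtain ⟨L, hL, -, hB⟩ := h
  exact fun C hC => (hB hC).elim (hA C) (hL.satClause hA C)

theorem exists_derives_subset_of_resolve {n₁ n₂ : ℕ} {C₁ C₂ D : Finset (V × Bool)} {x : V}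
    (h₁ : Derives A n₁ {C₁}) (h₂ : Derives A n₂ {C₂})
    (hC₁ : C₁ ⊆ insert (x, true) D) (hC₂ : C₂ ⊆ insert (x, false) D) :
    ∃ C ⊆ D, Derives A (n₁ + n₂ + 1) {C} := by
  by_cases hx₁ : (x, true) ∈ C₁
  · by_cases hx₂ : (x, false) ∈ C₂
    · exact ⟨_, union_subset (subset_insert_iff.mp hC₁) (subset_insert_iff.mp hC₂),
        h₁.resolve h₂ ⟨x, hx₁, hx₂, rfl⟩⟩
    · exact ⟨C₂, (subset_insert_iff_of_notMem hx₂).mp hC₂, h₂.mono (by omega)⟩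
  · exact ⟨C₁, (subset_insert_iff_of_notMem hx₁).mp hC₁, h₁.mono (by omega)⟩

theorem exists_derives_subset_of_resolve_finset {ι : Type*} [DecidableEq ι] {m : ℕ}
    {D : Finset (V × Bool)} (f : ι → V) (S : Finset ι)
    (hC : ∀ k ∈ S, ∃ C ⊆ insert (f k, false) D, Derives A m {C}) :
    ∀ {c : ℕ} {W : Finset (V × Bool)}, Derives A c {W} →
      W ⊆ D ∪ S.image (fun k => (f k, true)) → ∃ C ⊆ D, Derives A (c + #S * (m + 1)) {C} := by
  induction S using Finset.induction_on with
  | empty =>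
    intro c W hW hWD
    exact ⟨W, by simpa using hWD, by simpa using hW⟩
  | @insert k S hk ih =>
    intro c W hW hWD
    obtain ⟨C, hCD, hCd⟩ := hC k (mem_insert_self k S)
    rw [image_insert, union_insert] at hWD
    obtain ⟨W', hW'D, hW'd⟩ := exists_derives_subset_of_resolve hW hCd hWD
      (hCD.trans (insert_subset_insert _ subset_union_left))
    obtain ⟨C', hC'D, hC'd⟩ := ih (fun j hj => hC j (mem_insert_of_mem hj)) hW'd hW'D
    refine ⟨C', hC'D, hC'd.mono (le_of_eq ?_)⟩
    rw [card_insert_of_notMem hk]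
    ring

end Resolution

section LinearEquations

variable {n : ℕ}

def negClause {K : Type*} [DecidableEq K] (T : Finset (Fin n)) (z : Fin n → K) :
    Finset ((Fin n × K) × Bool) :=
  T.image fun i => ((i, z i), false)

theorem negClause_update_subset {K : Type*} [DecidableEq K] (T : Finset (Fin n))
    (z : Fin n → K) (i : Fin n) (k : K) :
    negClause T (Function.update z i k) ⊆ insert ((i, k), false) (negClause (T.erase i) z) := by
  intro l hl
  unfold negClause at hl
  obtain ⟨j, hj, rfl⟩ := mem_image.mp hl
  by_cases hji : j = i
  · subst hji
    simp
  · rw [Function.update_of_ne hji]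
    exact mem_insert_of_mem (mem_image_of_mem _ (mem_erase.mpr ⟨hji, hj⟩))

theorem suppV_add_subset {K : Type*} [AddZeroClass K] [DecidableEq K] (a₁ a₂ : Fin n → K) :
    suppV (a₁ + a₂) ⊆ suppV a₁ ∪ suppV a₂ := by
  intro i
  simp only [suppV, mem_filter, mem_univ, true_and, mem_union, Pi.add_apply]
  contrapose!
  rintro ⟨h₁, h₂⟩
  rw [h₁, h₂, add_zero]

theorem dotProduct_congr_of_support {R : Type*} [NonUnitalNonAssocSemiring R]
    {a x y : Fin n → R} (h : ∀ i, a i ≠ 0 → x i = y i) : a ⬝ᵥ x = a ⬝ᵥ y := by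
  refine sum_congr rfl fun i _ => ?_
  by_cases hi : a i = 0
  · simp [hi]
  · rw [h i hi]

variable {p : ℕ}

theorem CCl_mem_FEq {a z : Fin n → ZMod p} {b : ZMod p} (h : a ⬝ᵥ z ≠ b) :
    CCl a z ∈ FEq a b := by
  refine ⟨fun i => if a i = 0 then 0 else z i, ⟨?_, fun i => ?_⟩, image_congr fun i hi => ?_⟩
  · rwa [dotProduct_congr_of_support fun i hi => if_neg hi]
  · simp only [suppV, mem_filter, mem_univ, true_and]
    split_ifs <;> simp_all
  · simp_all [suppV]

theorem mul_add_one_le_two_mul_pow_sub_one {m k : ℕ} (hp : 2 ≤ p) (hm : m ≤ 2 * (p ^ k - 1)) :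
    p * (m + 1) ≤ 2 * (p ^ (k + 1) - 1) := by
  obtain ⟨q, hq⟩ : ∃ q, p ^ k = q + 1 :=
    ⟨p ^ k - 1, (Nat.sub_add_cancel (Nat.one_le_pow _ _ (by omega))).symm⟩
  rw [hq, Nat.add_sub_cancel] at hm
  have hmul : p * (m + 1) ≤ p * (2 * q + 1) := Nat.mul_le_mul_left p (by omega)
  have hpow : p ^ (k + 1) = p * q + p := by rw [pow_succ, hq]; ring
  have hexp : p * (2 * q + 1) = 2 * (p * q) + p := by ring
  omega

theorem exists_derives_subset_negClause [NeZero p] (hp : 2 ≤ p) (a₁ a₂ : Fin n → ZMod p)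
    (b₁ b₂ : ZMod p) (s : Finset (Fin n)) (hs : ∀ i ∈ s, (a₁ + a₂) i = 0)
    (z : Fin n → ZMod p) (hz : (a₁ + a₂) ⬝ᵥ z ≠ b₁ + b₂) :
    ∃ C ⊆ negClause ((suppV a₁ ∪ suppV a₂) \ s) z,
      Derives (FEq a₁ b₁ ∪ FEq a₂ b₂ ∪ VCl n p) (2 * (p ^ #s - 1)) {C} := by
  induction s using Finset.induction_on generalizing z with
  | empty =>
    rw [add_dotProduct] at hz
    have hviol : a₁ ⬝ᵥ z ≠ b₁ ∨ a₂ ⬝ᵥ z ≠ b₂ := by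
      by_contra! h
      exact hz (by rw [h.1, h.2])
    rw [sdiff_empty]
    rcases hviol with h | h
    · exact ⟨CCl a₁ z, image_subset_image (f := fun i => ((i, z i), false)) subset_union_left,
        (Derives.of_mem (Or.inl (Or.inl (CCl_mem_FEq h)))).mono (Nat.zero_le _)⟩
    · exact ⟨CCl a₂ z, image_subset_image (f := fun i => ((i, z i), false)) subset_union_right,
        (Derives.of_mem (Or.inl (Or.inr (CCl_mem_FEq h)))).mono (Nat.zero_le _)⟩
  | @insert i s hi ih =>
    have hcases : ∀ k ∈ (univ : Finset (ZMod p)), ∃ C ⊆ insert ((i, k), false)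
        (negClause ((suppV a₁ ∪ suppV a₂) \ insert i s) z),
        Derives (FEq a₁ b₁ ∪ FEq a₂ b₂ ∪ VCl n p) (2 * (p ^ #s - 1)) {C} := by
      intro k _
      have hzk : (a₁ + a₂) ⬝ᵥ Function.update z i k = (a₁ + a₂) ⬝ᵥ z :=
        dotProduct_congr_of_support fun j hj =>
          Function.update_of_ne (by rintro rfl; exact hj (hs j (mem_insert_self j s))) _ _
      obtain ⟨C, hCz, hCd⟩ := ih (fun j hj => hs j (mem_insert_of_mem hj))
        (Function.update z i k) (hzk ▸ hz)
      rw [sdiff_insert]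
      exact ⟨C, hCz.trans (negClause_update_subset _ _ _ _), hCd⟩
    obtain ⟨C, hCz, hCd⟩ := exists_derives_subset_of_resolve_finset (Prod.mk i) univ hcases
      (Derives.of_mem (Or.inr ⟨i, rfl⟩)) subset_union_right
    refine ⟨C, hCz, hCd.mono ?_⟩
    rw [zero_add, card_univ, ZMod.card, card_insert_of_notMem hi]
    exact mul_add_one_le_two_mul_pow_sub_one hp le_rfl

end LinearEquations

/-- Sum resolution: every clause of `F(a₁+a₂, b₁+b₂)` is entailed by
`F(a₁,b₁) ∧ F(a₂,b₂) ∧ V`, and (some subclause of) it has a resolution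
derivation of length at most `2(p^{|θ|} − 1)` where `θ = lv(a₁,a₂)`. -/
theorem stmt9 {p n : ℕ} [Fact (Nat.Prime p)]
    (a₁ a₂ : Fin n → ZMod p) (b₁ b₂ : ZMod p) :
    ∀ C ∈ FEq (a₁ + a₂) (b₁ + b₂),
      (∀ φ : (Fin n × ZMod p) → Bool,
          SatSet φ (FEq a₁ b₁ ∪ FEq a₂ b₂ ∪ VCl n p) → SatClause φ C) ∧
      ∃ C' ⊆ C, Derives (FEq a₁ b₁ ∪ FEq a₂ b₂ ∪ VCl n p)
          (2 * (p ^ (((suppV a₁ ∪ suppV a₂) \ suppV (a₁ + a₂)).card) - 1)) {C'} := by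
  rintro _ ⟨x, ⟨hx, -⟩, rfl⟩
  have hθ : ∀ i ∈ (suppV a₁ ∪ suppV a₂) \ suppV (a₁ + a₂), (a₁ + a₂) i = 0 := fun i hi => by
    simpa [suppV] using (mem_sdiff.mp hi).2
  obtain ⟨C', hC'x, hC'd⟩ :=
    exists_derives_subset_negClause (Fact.out : p.Prime).two_le a₁ a₂ b₁ b₂ _ hθ x hx
  rw [sdiff_sdiff_right_self, inf_eq_inter, inter_eq_right.mpr (suppV_add_subset a₁ a₂)] at hC'x
  change C' ⊆ CCl (a₁ + a₂) x at hC'x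
  refine ⟨fun φ hφ => ?_, C', hC'x, hC'd⟩
  obtain ⟨l, hl, hφl⟩ := hC'd.satSet hφ C' rfl
  exact ⟨l, hC'x hl, hφl⟩
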